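/- arXiv:2111.08319 — 3 statements merged into one kernel-verified Lean document; each statement's English description precedes it below -/
import Mathlib

section
/- Let V, l : ℕ → ℝ≥0 satisfy V(k) = V(0) - ∑_{j<k} l(j) for all k (so V is nonincreasing), and suppose V(k) ≤ γ l(k) whenever l(k) ≤ ε, where γ ≥ 1 and ε > 0. If l(k₀) ≤ ε for some k₀, then V(k) ≤ ((γ-1)/γ)^{k-k₀} V(k₀) for all k ≥ k₀. -/
/-! Once `l k₀ ≤ ε`, the local bound gives `V k₀ ≤ γ ε`. Since `V` is nonincreasing, `V k ≤ γ l k`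
then holds for every `k ≥ k₀`: either `l k ≤ ε` and the local bound applies, or `l k > ε` and
`V k ≤ V k₀ ≤ γ ε < γ l k`. Hence each step `V (k + 1) = V k - l k` removes at least the fraction
`1 / γ` of `V`, i.e. `V (k + 1) ≤ (1 - 1 / γ) V k`. -/

lemma succ_eq_sub_of_eq_sub_sum {V l : ℕ → ℝ} (hdp : ∀ k, V k = V 0 - ∑ j ∈ Finset.range k, l j)
    (k : ℕ) : V (k + 1) = V k - l k := by
  rw [hdp (k + 1), hdp k, Finset.sum_range_succ]
  ring

lemma antitone_of_eq_sub_sum {V l : ℕ → ℝ} (hl : ∀ k, 0 ≤ l k)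
    (hdp : ∀ k, V k = V 0 - ∑ j ∈ Finset.range k, l j) : Antitone V :=
  antitone_nat_of_succ_le fun k => by
    rw [succ_eq_sub_of_eq_sub_sum hdp k]
    linarith [hl k]

lemma le_mul_of_antitone_of_local_bound {V l : ℕ → ℝ} {γ ε : ℝ} {k₀ : ℕ} (hV : Antitone V)
    (hγ : 0 ≤ γ) (hloc : ∀ k, l k ≤ ε → V k ≤ γ * l k) (hk₀ : l k₀ ≤ ε) {k : ℕ} (hk : k₀ ≤ k) :
    V k ≤ γ * l k := by
  rcases le_or_gt (l k) ε with hsmall | hlarge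
  · exact hloc k hsmall
  · calc V k ≤ V k₀ := hV hk
      _ ≤ γ * l k₀ := hloc k₀ hk₀
      _ ≤ γ * l k := by gcongr; linarith

lemma sub_le_mul_of_le_mul {v l γ : ℝ} (hγ : 0 < γ) (h : v ≤ γ * l) :
    v - l ≤ (γ - 1) / γ * v := by
  rw [div_mul_eq_mul_div, le_div_iff₀ hγ]
  nlinarith

lemma le_pow_mul_of_succ_le_mul {u : ℕ → ℝ} {r : ℝ} {k₀ : ℕ} (hr : 0 ≤ r)
    (hstep : ∀ k, k₀ ≤ k → u (k + 1) ≤ r * u k) :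
    ∀ k, k₀ ≤ k → u k ≤ r ^ (k - k₀) * u k₀ := by
  intro k hk
  induction k, hk using Nat.le_induction with
  | base => simp
  | succ n hn ih =>
    calc u (n + 1) ≤ r * u n := hstep n hn
      _ ≤ r * (r ^ (n - k₀) * u k₀) := by gcongr
      _ = r ^ (n + 1 - k₀) * u k₀ := by rw [Nat.succ_sub hn, pow_succ]; ring

theorem stmt_8_general (V l : ℕ → ℝ) (γ ε : ℝ) (k₀ : ℕ)
    (hl : ∀ k, 0 ≤ l k)
    (hdp : ∀ k, V k = V 0 - ∑ j ∈ Finset.range k, l j)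
    (hγ : 1 ≤ γ)
    (hloc : ∀ k, l k ≤ ε → V k ≤ γ * l k)
    (hk₀ : l k₀ ≤ ε) :
    ∀ k, k₀ ≤ k → V k ≤ ((γ - 1) / γ) ^ (k - k₀) * V k₀ := by
  have hγ0 : 0 < γ := by linarith
  have hanti := antitone_of_eq_sub_sum hl hdp
  refine le_pow_mul_of_succ_le_mul (div_nonneg (by linarith) hγ0.le) fun k hk => ?_
  rw [succ_eq_sub_of_eq_sub_sum hdp k]
  exact sub_le_mul_of_le_mul hγ0 (le_mul_of_antitone_of_local_bound hanti hγ0.le hloc hk₀ hk)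

theorem stmt_8 (V l : ℕ → ℝ) (γ ε : ℝ) (k₀ : ℕ)
    (hV : ∀ k, 0 ≤ V k) (hl : ∀ k, 0 ≤ l k)
    (hdp : ∀ k, V k = V 0 - ∑ j ∈ Finset.range k, l j)
    (hγ : 1 ≤ γ) (hε : 0 < ε)
    (hloc : ∀ k, l k ≤ ε → V k ≤ γ * l k)
    (hlV : ∀ k, l k ≤ V k)
    (hk₀ : l k₀ ≤ ε) :
    ∀ k, k₀ ≤ k → V k ≤ ((γ - 1) / γ) ^ (k - k₀) * V k₀ :=
  stmt_8_general V l γ ε k₀ hl hdp hγ hloc hk₀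
end

section
/- Suppose V̂ : Ω → ℝ satisfies (1-c) l*(x) ≤ V̂(x) ≤ 2γ₀ l*(x) and V̂(F(x)) - V̂(x) ≤ -l*(x) + c l*(x) + (4c/(1-c)) γ₀ l*(x) for all x ∈ Ω, where c ∈ [0,1), γ₀ > 0. If c < 1 + 2γ₀ - √(4γ₀² + 4γ₀), then there exists δ > 0 such that V̂(F(x)) - V̂(x) ≤ -δ l*(x) for all x ∈ Ω; i.e., V̂ is a strict Lyapunov-decrease function. -/
theorem stmt_10 {X : Type*} (Ω : Set X) (Vhat lstar : X → ℝ) (F : X → X)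
    (c γ₀ : ℝ) (hc : c ∈ Set.Ico (0:ℝ) 1) (hγ₀ : 0 < γ₀)
    (hl : ∀ x ∈ Ω, 0 ≤ lstar x)
    (hlb : ∀ x ∈ Ω, (1 - c) * lstar x ≤ Vhat x)
    (hub : ∀ x ∈ Ω, Vhat x ≤ 2 * γ₀ * lstar x)
    (hdec : ∀ x ∈ Ω, Vhat (F x) - Vhat x ≤
      -lstar x + c * lstar x + (4 * c / (1 - c)) * γ₀ * lstar x)
    (hstab : c < 1 + 2 * γ₀ - Real.sqrt (4 * γ₀ ^ 2 + 4 * γ₀)) :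
    ∃ δ > 0, ∀ x ∈ Ω, Vhat (F x) - Vhat x ≤ -δ * lstar x := by
  obtain ⟨hc0, hc1⟩ := hc
  have h1c : (0:ℝ) < 1 - c := by linarith
  have hsq : Real.sqrt (4 * γ₀ ^ 2 + 4 * γ₀) ^ 2 = 4 * γ₀ ^ 2 + 4 * γ₀ :=
    Real.sq_sqrt (by positivity)
  have hsnn : 0 ≤ Real.sqrt (4 * γ₀ ^ 2 + 4 * γ₀) := Real.sqrt_nonneg _
  have key : 4 * γ₀ ^ 2 + 4 * γ₀ < (1 + 2 * γ₀ - c) ^ 2 := by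
    have h2 : Real.sqrt (4 * γ₀ ^ 2 + 4 * γ₀) < 1 + 2 * γ₀ - c := by linarith
    nlinarith
  -- (1-c)^2 > 4 c γ₀
  have hpos : 0 < 1 - c - 4 * c / (1 - c) * γ₀ := by
    rw [sub_pos, div_mul_eq_mul_div, div_lt_iff₀ h1c]
    nlinarith
  refine ⟨1 - c - 4 * c / (1 - c) * γ₀, hpos, fun x hx => ?_⟩
  have := hdec x hx
  have hlx := hl x hx
  nlinarith [this, hlx]
end

section
/- Suppose V_N, V_∞ : X → ℝ≥0 satisfy l*(x) ≤ V_N(x), a decrease condition V_N(F(x)) + α₁ l(x, κ(x)) ≤ V_N(x) with α₁ ∈ (0,1] and l(x,κ(x)) ≥ l*(x), and an upper bound V_N(x) ≤ α₂ V_∞(x) with α₂ ≥ 1, for all x in a sublevel set S = {x : V_N(x) ≤ β} that is invariant under F. Then the closed-loop cost satisfies J(x₀) = ∑_k l(x_k, κ(x_k)) ≤ (α₂/α₁) V_∞(x₀) for every x₀ ∈ S. -/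
theorem stmt_14 {X : Type*} (VN Vinf lstar L : X → ℝ) (F : X → X)
    (α₁ α₂ β : ℝ) (hα₁ : α₁ ∈ Set.Ioc (0:ℝ) 1) (hα₂ : 1 ≤ α₂) (hβ : 0 < β)
    (hinv : ∀ x, VN x ≤ β → VN (F x) ≤ β)
    (hVinf_nonneg : ∀ x, 0 ≤ Vinf x)
    (hls_nonneg : ∀ x, VN x ≤ β → 0 ≤ lstar x)
    (hlb : ∀ x, VN x ≤ β → lstar x ≤ VN x)
    (hdec : ∀ x, VN x ≤ β → VN (F x) + α₁ * L x ≤ VN x)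
    (hL : ∀ x, VN x ≤ β → lstar x ≤ L x)
    (hub : ∀ x, VN x ≤ β → VN x ≤ α₂ * Vinf x)
    (x₀ : X) (hx₀ : VN x₀ ≤ β)
    (traj : ℕ → X) (h0 : traj 0 = x₀) (hstep : ∀ k, traj (k + 1) = F (traj k)) :
    ∑' k, L (traj k) ≤ (α₂ / α₁) * Vinf x₀ := by
  obtain ⟨hα₁pos, hα₁le⟩ := hα₁
  -- every trajectory point stays in the sublevel set
  have hS : ∀ k, VN (traj k) ≤ β := by
    intro k
    induction k with
    | zero => rwa [h0]
    | succ n ih => rw [hstep]; exact hinv _ ih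
  -- nonnegativity of L along the trajectory
  have hLnn : ∀ k, 0 ≤ L (traj k) := fun k =>
    le_trans (hls_nonneg _ (hS k)) (hL _ (hS k))
  -- VN is nonneg on the set
  have hVNnn : ∀ k, 0 ≤ VN (traj k) := fun k =>
    le_trans (hls_nonneg _ (hS k)) (hlb _ (hS k))
  -- telescoping partial-sum bound
  have hsum : ∀ n, α₁ * ∑ i ∈ Finset.range n, L (traj i) ≤ VN x₀ := by
    intro n
    have key : ∀ n, VN (traj n) + α₁ * ∑ i ∈ Finset.range n, L (traj i) ≤ VN x₀ := by
      intro n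
      induction n with
      | zero => simp [h0]
      | succ m ih =>
        have hd := hdec _ (hS m)
        rw [← hstep] at hd
        calc VN (traj (m+1)) + α₁ * ∑ i ∈ Finset.range (m+1), L (traj i)
            = (VN (traj (m+1)) + α₁ * L (traj m)) + α₁ * ∑ i ∈ Finset.range m, L (traj i) := by
              rw [Finset.sum_range_succ]; ring
          _ ≤ VN (traj m) + α₁ * ∑ i ∈ Finset.range m, L (traj i) := by linarith
          _ ≤ VN x₀ := ih
    have := key n
    have := hVNnn n
    linarith
  -- hence partial sums of L are bounded by (α₂/α₁) * Vinf x₀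
  have hbound : ∀ n, ∑ i ∈ Finset.range n, L (traj i) ≤ (α₂ / α₁) * Vinf x₀ := by
    intro n
    have h1 : VN x₀ ≤ α₂ * Vinf x₀ := hub _ hx₀
    have h2 : α₁ * ∑ i ∈ Finset.range n, L (traj i) ≤ α₂ * Vinf x₀ := le_trans (hsum n) h1
    rw [div_mul_eq_mul_div, le_div_iff₀ hα₁pos]
    linarith [h2]
  exact Real.tsum_le_of_sum_range_le hLnn hbound
end
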